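/- Let (T^m, g) be a Riemannian torus of dimension m ≥ 2, and let γ_1, …, γ_m be closed geodesics realizing the m successive minima, i.e. for each k, ℓ_g(γ_k) = min { λ : there exist k Z_2-homologically independent closed curves in T^m each of length at most λ }, with [γ_1], …, [γ_m] linearly independent in H_1(T^m; Z_2). Let (ζ_1, …, ζ_m) be the basis of H^1(T^m; Z_2) dual to the basis ([γ_1], …, [γ_m]) of H_1(T^m; Z_2). Then the cup product ζ_1 ∪ … ∪ ζ_m is nonzero in H^m(T^m; Z_2), and L(ζ_k) = ℓ_g(γ_k) for every k = 1, …, m. -/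

import Mathlib

/-!
We formalize the torus `T^m = ℝ^m/ℤ^m` through `ℤ^m`-periodic data on `ℝ^m`.

* A Riemannian metric `g` on `T^m` is a smooth `ℤ^m`-periodic field
  `G : ℝ^m → Sym⁺(m)` of symmetric positive definite matrices.
* A closed curve on `T^m` is described by a lift `γ : ℝ → ℝ^m` with
  `γ (t+1) = γ t + w` for some `w ∈ ℤ^m`; its `ℤ₂`-homology class in
  `H₁(T^m;ℤ₂) ≅ (ℤ₂)^m` is `w mod 2`.
* `H^1(T^m;ℤ₂)` is identified with the dual space of `H₁(T^m;ℤ₂) ≅ (ℤ₂)^m`,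
  the pairing `⟨ζ,[γ]⟩` being evaluation `ζ (w mod 2)`.  Under the standard
  identification `H^m(T^m;ℤ₂) ≅ ℤ₂` (exterior algebra on `H^1`), the cup
  product `ζ₁ ∪ ⋯ ∪ ζ_m` of `m` degree-one classes is the determinant of the
  matrix of coordinates of the `ζ_i` in the standard basis.
-/

noncomputable section

open MeasureTheory Matrix

/-- A Riemannian metric on the torus `ℝ^m/ℤ^m`: a smooth, `ℤ^m`-periodic field of
symmetric positive definite matrices on `ℝ^m`. -/
structure IsTorusMetric (m : ℕ) (G : (Fin m → ℝ) → Matrix (Fin m) (Fin m) ℝ) : Prop where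
  smooth : ∀ i j, ContDiff ℝ (⊤ : ℕ∞) fun x => G x i j
  periodic : ∀ (x : Fin m → ℝ) (v : Fin m → ℤ), G (x + fun i => (v i : ℝ)) = G x
  symm : ∀ x, (G x).IsSymm
  posDef : ∀ x, (G x).PosDef

/-- The Riemannian length `ℓ_g(γ)` of a curve on `T^m` over one period `[0,1]`. -/
def torusLength {m : ℕ} (G : (Fin m → ℝ) → Matrix (Fin m) (Fin m) ℝ)
    (γ : ℝ → Fin m → ℝ) : ℝ :=
  ∫ t in (0:ℝ)..1, Real.sqrt (dotProduct (deriv γ t) ((G (γ t)).mulVec (deriv γ t)))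

/-- Partial derivative of `f : ℝ^m → ℝ` in the `i`-th coordinate direction. -/
def pderiv₁ {m : ℕ} (i : Fin m) (f : (Fin m → ℝ) → ℝ) (x : Fin m → ℝ) : ℝ :=
  fderiv ℝ f x (Pi.single i 1)

/-- Christoffel symbols `Γᵏᵢⱼ = ½ gᵏˡ (∂ᵢ g_{jl} + ∂ⱼ g_{il} - ∂ˡ g_{ij})` of the metric `G`. -/
def christoffel {m : ℕ} (G : (Fin m → ℝ) → Matrix (Fin m) (Fin m) ℝ)
    (x : Fin m → ℝ) (k i j : Fin m) : ℝ :=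
  (1 / 2) * ∑ l, (G x)⁻¹ k l *
    (pderiv₁ i (fun y => G y j l) x + pderiv₁ j (fun y => G y i l) x
      - pderiv₁ l (fun y => G y i j) x)

/-- `γ` is a closed curve on `T^m` (of class `C¹`, parametrized by `[0,1]`) whose
homotopy class is `w ∈ ℤ^m ≅ π₁(T^m)`. -/
def IsClosedCurve {m : ℕ} (γ : ℝ → Fin m → ℝ) (w : Fin m → ℤ) : Prop :=
  ContDiff ℝ 1 γ ∧ ∀ t, γ (t + 1) = γ t + fun i => (w i : ℝ)

/-- `γ` is a closed geodesic of `(T^m, G)` with homotopy class `w`. -/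
def IsClosedGeodesic {m : ℕ} (G : (Fin m → ℝ) → Matrix (Fin m) (Fin m) ℝ)
    (γ : ℝ → Fin m → ℝ) (w : Fin m → ℤ) : Prop :=
  ContDiff ℝ (⊤ : ℕ∞) γ ∧
  (∀ t, γ (t + 1) = γ t + fun i => (w i : ℝ)) ∧
  ∀ t k, deriv (fun s => deriv γ s k) t
      + ∑ i, ∑ j, christoffel G (γ t) k i j * deriv γ t i * deriv γ t j = 0

/-- The `ℤ₂`-homology class in `H₁(T^m;ℤ₂) ≅ (ℤ₂)^m` of a closed curve with
homotopy class `w ∈ ℤ^m`. -/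
def homClass {m : ℕ} (w : Fin m → ℤ) : Fin m → ZMod 2 := fun j => ((w j : ZMod 2))

/-- The `k`-th successive minimum of `(T^m, G)`:
`min { λ | there are k ℤ₂-homologically independent closed curves of length ≤ λ }`. -/
def succMin {m : ℕ} (G : (Fin m → ℝ) → Matrix (Fin m) (Fin m) ℝ) (k : ℕ) : ℝ :=
  sInf {lam : ℝ |
    ∃ (γ : Fin k → ℝ → Fin m → ℝ) (w : Fin k → Fin m → ℤ),
      (∀ i, IsClosedCurve (γ i) (w i)) ∧
      LinearIndependent (ZMod 2) (fun i => homClass (w i)) ∧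
      ∀ i, torusLength G (γ i) ≤ lam}

/-- `L(ζ) = inf { ℓ_g(γ) | γ closed curve with ⟨ζ,[γ]⟩ ≠ 0 }`, where
`ζ ∈ H^1(T^m;ℤ₂)` is seen as a linear form on `H₁(T^m;ℤ₂) ≅ (ℤ₂)^m`. -/
def Lmin {m : ℕ} (G : (Fin m → ℝ) → Matrix (Fin m) (Fin m) ℝ)
    (ζ : Module.Dual (ZMod 2) (Fin m → ZMod 2)) : ℝ :=
  sInf {l : ℝ | ∃ (γ : ℝ → Fin m → ℝ) (w : Fin m → ℤ),
    IsClosedCurve γ w ∧ ζ (homClass w) ≠ 0 ∧ l = torusLength G γ}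

/-- The cup product `ζ₁ ∪ ⋯ ∪ ζ_m ∈ H^m(T^m;ℤ₂) ≅ ℤ₂` of `m` classes in
`H^1(T^m;ℤ₂)`: under the identification of `H^*(T^m;ℤ₂)` with the exterior
algebra on `H^1(T^m;ℤ₂) ≅ ((ℤ₂)^m)^*`, it is the determinant of the matrix of
coordinates of the `ζ_i`. -/
def cupTop {m : ℕ} (ζ : Fin m → Module.Dual (ZMod 2) (Fin m → ZMod 2)) : ZMod 2 :=
  Matrix.det (Matrix.of fun i j => ζ i (Pi.single j 1))

lemma torusLength_nonneg' {m : ℕ} (G : (Fin m → ℝ) → Matrix (Fin m) (Fin m) ℝ)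
    (f : ℝ → Fin m → ℝ) : 0 ≤ torusLength G f :=
  intervalIntegral.integral_nonneg zero_le_one (fun _ _ => Real.sqrt_nonneg _)

lemma linearIndependent_of_dual_family {K V : Type*} [Field K] [AddCommGroup V] [Module K V]
    {ι : Type*} [Fintype ι] [DecidableEq ι] (v : ι → V) (φ : ι → Module.Dual K V)
    (h : ∀ i l, φ i (v l) = if i = l then 1 else 0) : LinearIndependent K v := by
  rw [Fintype.linearIndependent_iff]
  intro g hg i
  have h2 := congrArg (φ i) hg
  rw [map_sum, map_zero] at h2
  have h3 : ∀ l, φ i (g l • v l) = if i = l then g l else 0 := by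
    intro l
    rw [LinearMap.map_smul, h i l, smul_eq_mul]
    split <;> simp
  rw [Finset.sum_congr rfl (fun l _ => h3 l), Finset.sum_ite_eq] at h2
  simpa using h2

/-- Closed geodesics realizing the successive minima of a Riemannian torus are
`L`-minimizing for the dual basis: if `γ₁, …, γ_m` are homologically independent
closed geodesics with `ℓ_g(γ_k)` equal to the `k`-th successive minimum, and
`(ζ₁, …, ζ_m)` is the basis of `H^1(T^m;ℤ₂)` dual to `([γ₁], …, [γ_m])`, then
`ζ₁ ∪ ⋯ ∪ ζ_m ≠ 0` in `H^m(T^m;ℤ₂)` and `L(ζ_k) = ℓ_g(γ_k)` for every `k`. -/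
theorem dual_basis_cup_nonzero_and_L_eq_length
    (m : ℕ) (hm : 2 ≤ m)
    (G : (Fin m → ℝ) → Matrix (Fin m) (Fin m) ℝ)
    (hG : IsTorusMetric m G)
    (γ : Fin m → ℝ → Fin m → ℝ) (w : Fin m → Fin m → ℤ)
    (hgeo : ∀ k, IsClosedGeodesic G (γ k) (w k))
    (hind : LinearIndependent (ZMod 2) (fun k => homClass (w k)))
    (hmin : ∀ k : Fin m, torusLength G (γ k) = succMin G (k.1 + 1))
    (ζ : Fin m → Module.Dual (ZMod 2) (Fin m → ZMod 2))
    (hdual : ∀ i j, ζ i (homClass (w j)) = if i = j then 1 else 0) :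
    cupTop ζ ≠ 0 ∧ ∀ k : Fin m, Lmin G (ζ k) = torusLength G (γ k) := by
  have hone : ∀ x : ZMod 2, x ≠ 0 → x = 1 := by decide
  have hcurve : ∀ i, IsClosedCurve (γ i) (w i) :=
    fun i => ⟨(hgeo i).1.of_le (by simp), (hgeo i).2.1⟩
  constructor
  · -- cup product nonzero
    intro h0
    set M : Matrix (Fin m) (Fin m) (ZMod 2) :=
      Matrix.of fun i j => ζ i (Pi.single j 1) with hM
    set A : Matrix (Fin m) (Fin m) (ZMod 2) :=
      Matrix.of fun i j => homClass (w i) j with hA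
    have hMA : M * Aᵀ = 1 := by
      ext i j
      have hbj : homClass (w j) = ∑ l, homClass (w j) l • Pi.single l (1 : ZMod 2) := by
        ext x
        simp [Pi.single_apply, eq_comm]
      have hd := hdual i j
      rw [hbj, map_sum] at hd
      simp only [LinearMap.map_smul, smul_eq_mul] at hd
      simp only [Matrix.mul_apply, Matrix.transpose_apply, hM, hA, Matrix.of_apply,
        Matrix.one_apply]
      rw [Finset.sum_congr rfl (fun l _ => mul_comm (ζ i (Pi.single l 1)) (homClass (w j) l))]
      exact hd
    have hdet : M.det * Aᵀ.det = 1 := by rw [← Matrix.det_mul, hMA, Matrix.det_one]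
    have : (0 : ZMod 2) = 1 := by
      have hM0 : M.det = 0 := h0
      rw [hM0, zero_mul] at hdet
      exact hdet
    exact absurd this (by decide)
  · intro k
    have hk : k.1 < m := k.2
    apply le_antisymm
    · apply csInf_le
      · exact ⟨0, fun l hl => by
          obtain ⟨σ, u, _, _, rfl⟩ := hl
          exact torusLength_nonneg' G σ⟩
      · exact ⟨γ k, w k, hcurve k, by simp [hdual k k], rfl⟩
    · apply le_csInf
      · exact ⟨torusLength G (γ k), γ k, w k, hcurve k, by simp [hdual k k], rfl⟩
      · rintro l ⟨σ, u, hσ, hζu, rfl⟩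
        by_contra hlt
        push_neg at hlt
        have hck : ζ k (homClass u) = 1 := hone _ hζu
        have key : ∀ j : ℕ, j ≤ k.1 → succMin G (j + 1) ≤ torusLength G σ := by
          intro j
          induction j using Nat.strong_induction_on with
          | _ j IH =>
            intro hj
            -- family of j+1 curves: γ_0, …, γ_{j-1}, σ
            have hemb : ∀ i : Fin (j + 1), i.1 < j → i.1 < m := fun i hi => by omega
            set F : Fin (j + 1) → ℝ → Fin m → ℝ :=
              fun i => if h : i.1 < j then γ ⟨i.1, hemb i h⟩ else σ with hF
            set W : Fin (j + 1) → Fin m → ℤ :=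
              fun i => if h : i.1 < j then w ⟨i.1, hemb i h⟩ else u with hW
            set φ : Fin (j + 1) → Module.Dual (ZMod 2) (Fin m → ZMod 2) :=
              fun i => if h : i.1 < j
                then ζ ⟨i.1, hemb i h⟩ + (ζ ⟨i.1, hemb i h⟩ (homClass u)) • ζ k
                else ζ k with hφ
            have hmem : torusLength G σ ∈ {lam : ℝ |
                ∃ (γ' : Fin (j + 1) → ℝ → Fin m → ℝ) (w' : Fin (j + 1) → Fin m → ℤ),
                  (∀ i, IsClosedCurve (γ' i) (w' i)) ∧
                  LinearIndependent (ZMod 2) (fun i => homClass (w' i)) ∧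
                  ∀ i, torusLength G (γ' i) ≤ lam} := by
              refine ⟨F, W, ?_, ?_, ?_⟩
              · intro i
                by_cases h : i.1 < j
                · simp only [hF, hW, dif_pos h]
                  exact hcurve _
                · simp only [hF, hW, dif_neg h]
                  exact hσ
              · apply linearIndependent_of_dual_family _ φ
                intro i l
                have hkne : ∀ (h : l.1 < j), k ≠ ⟨l.1, hemb l h⟩ := by
                  intro h hkl
                  have : k.1 = l.1 := congrArg Fin.val hkl
                  omega
                by_cases hi : i.1 < j <;> by_cases hl : l.1 < j
                · simp only [hφ, hW, dif_pos hi, dif_pos hl, LinearMap.add_apply,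
                    LinearMap.smul_apply, smul_eq_mul]
                  rw [hdual, hdual]
                  rw [if_neg (hkne hl)]
                  have hiff : (⟨i.1, hemb i hi⟩ : Fin m) = ⟨l.1, hemb l hl⟩ ↔ i = l := by
                    simp [Fin.ext_iff]
                  simp only [mul_zero, add_zero]
                  split <;> split <;> simp_all [hiff]
                · simp only [hφ, hW, dif_pos hi, dif_neg hl, LinearMap.add_apply,
                    LinearMap.smul_apply, smul_eq_mul, hck, mul_one]
                  have : i ≠ l := by intro h; rw [h] at hi; exact hl hi
                  rw [if_neg this]
                  have : ζ ⟨i.1, hemb i hi⟩ (homClass u) + ζ ⟨i.1, hemb i hi⟩ (homClass u)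
                      = 0 := by
                    have : ∀ x : ZMod 2, x + x = 0 := by decide
                    exact this _
                  exact this
                · simp only [hφ, hW, dif_neg hi, dif_pos hl]
                  rw [hdual, if_neg (hkne hl)]
                  have : i ≠ l := by intro h; rw [← h] at hl; exact hi hl
                  rw [if_neg this]
                · simp only [hφ, hW, dif_neg hi, dif_neg hl, hck]
                  have : i = l := by
                    apply Fin.ext
                    have hi1 : i.1 = j := by omega
                    have hl1 : l.1 = j := by omega
                    rw [hi1, hl1]
                  rw [if_pos this]
              · intro i
                by_cases h : i.1 < j
                · simp only [hF, dif_pos h]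
                  have := hmin ⟨i.1, hemb i h⟩
                  rw [this]
                  exact IH i.1 h (by omega)
                · simp only [hF, dif_neg h]
                  exact le_rfl
            have hbdd : BddBelow {lam : ℝ |
                ∃ (γ' : Fin (j + 1) → ℝ → Fin m → ℝ) (w' : Fin (j + 1) → Fin m → ℤ),
                  (∀ i, IsClosedCurve (γ' i) (w' i)) ∧
                  LinearIndependent (ZMod 2) (fun i => homClass (w' i)) ∧
                  ∀ i, torusLength G (γ' i) ≤ lam} := by
              refine ⟨0, fun lam hlam => ?_⟩
              obtain ⟨γ', w', _, _, hle⟩ := hlam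
              exact le_trans (torusLength_nonneg' G (γ' ⟨0, by omega⟩)) (hle ⟨0, by omega⟩)
            exact csInf_le hbdd hmem
        have hfin := key k.1 le_rfl
        rw [← hmin k] at hfin
        exact absurd hfin (not_le.mpr hlt)
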